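/- Liouville–Ostrogradski type formula: under the stated bi-orthogonality setup, for every m ≥ 0 and all z ∈ ℂ: B^{(1)}_m(z) G_m(z) − V_{m+1}(z) G^{(1)}_{m-1}(z) = A_m^{-1}, where A_m is the nonsingular coefficient appearing in the three-term recurrence relation. -/

import Mathlib

open Polynomial Matrix Finset

noncomputable section

/-- `N × N` matrices with polynomial entries, viewed as matrix polynomials. -/
abbrev MatPoly (N : ℕ) := Matrix (Fin N) (Fin N) (Polynomial ℂ)

/-- Evaluation of a matrix polynomial at a complex number (entrywise evaluation). -/
def evalM {N : ℕ} (Q : MatPoly N) (z : ℂ) : Matrix (Fin N) (Fin N) ℂ :=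
  Q.map (Polynomial.eval z)

/-- Composition of a matrix polynomial with a scalar polynomial `h` (entrywise). -/
def compH {N : ℕ} (Q : MatPoly N) (h : Polynomial ℂ) : MatPoly N :=
  Q.map fun p => p.comp h

/-- The vector polynomial `P₀(x) = [1, x, …, x^{N-1}]ᵀ`. -/
def P0 (N : ℕ) : Fin N → Polynomial ℂ := fun i => Polynomial.X ^ (i : ℕ)

/-- Action of a vector of linear functionals `U` on a vector polynomial `P`:
the matrix with `(i,j)` entry `u^j(p_i)`. -/
def applyU {N : ℕ} (U : Fin N → (Polynomial ℂ →ₗ[ℂ] ℂ)) (P : Fin N → Polynomial ℂ) :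
    Matrix (Fin N) (Fin N) ℂ := Matrix.of fun i j => U j (P i)

/-- The vector polynomial `B(x) = V(h(x)) P₀(x)` associated to a matrix polynomial `V`. -/
def Bvec {N : ℕ} (V : MatPoly N) (h : Polynomial ℂ) : Fin N → Polynomial ℂ :=
  (compH V h).mulVec (P0 N)

/-- `((Qᵀ U)(P))_{i,j} = Σ_s u^s (Q_{s,j} p_i)`. -/
def transApply {N : ℕ} (U : Fin N → (Polynomial ℂ →ₗ[ℂ] ℂ)) (Q : MatPoly N)
    (P : Fin N → Polynomial ℂ) : Matrix (Fin N) (Fin N) ℂ :=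
  Matrix.of fun i j => ∑ s, U s (Q s j * P i)

/-- The difference quotient `(p(z) - p(h(x)))/(z - h(x))` as a polynomial in the outer
variable `z` with coefficients polynomials in the inner variable `x`. -/
def diffQuot (p h : Polynomial ℂ) : Polynomial (Polynomial ℂ) :=
  (p.map (Polynomial.C : ℂ →+* Polynomial ℂ) - Polynomial.C (p.comp h)) /ₘ
    (Polynomial.X - Polynomial.C h)

/-- Apply a linear functional to the (inner-variable) coefficients of a two-variable
polynomial, leaving a polynomial in the outer variable. -/
def applyCoeff (u : Polynomial ℂ →ₗ[ℂ] ℂ) (q : Polynomial (Polynomial ℂ)) : Polynomial ℂ :=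
  q.sum fun n a => Polynomial.monomial n (u a)

/-- The first kind associated polynomial built from `W = V_{m+1}`:
`B⁽¹⁾_m(z) = U_x( ((W(z) - W(h(x)))/(z - h(x))) · P₀(x) )`. -/
def assocB {N : ℕ} (U : Fin N → (Polynomial ℂ →ₗ[ℂ] ℂ)) (W : MatPoly N) (h : Polynomial ℂ) :
    MatPoly N :=
  Matrix.of fun i j =>
    applyCoeff (U j) (∑ s, diffQuot (W i s) h * Polynomial.C (Polynomial.X ^ (s : ℕ)))

/-- The first kind associated polynomial built from `W = G_{m+1}`:
`G⁽¹⁾_m(z) = ( ((W(z) - W(h(x)))ᵀ/(z - h(x))) U_x )(P₀(x))`. -/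
def assocG {N : ℕ} (U : Fin N → (Polynomial ℂ →ₗ[ℂ] ℂ)) (W : MatPoly N) (h : Polynomial ℂ) :
    MatPoly N :=
  Matrix.of fun i j =>
    ∑ s, applyCoeff (U s) (diffQuot (W s j) h * Polynomial.C (Polynomial.X ^ (i : ℕ)))

/-- The shifted sequence of first kind associated polynomials: `B1seq U V h k = B⁽¹⁾_{k-1}`,
with the convention `B⁽¹⁾_{-1} = 0`. -/
def B1seq {N : ℕ} (U : Fin N → (Polynomial ℂ →ₗ[ℂ] ℂ)) (V : ℕ → MatPoly N)
    (h : Polynomial ℂ) : ℕ → MatPoly N :=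
  fun k => if k = 0 then 0 else assocB U (V k) h

/-- The shifted sequence `G1seq U G h k = G⁽¹⁾_{k-1}`, with `G⁽¹⁾_{-1} = 0`. -/
def G1seq {N : ℕ} (U : Fin N → (Polynomial ℂ →ₗ[ℂ] ℂ)) (G : ℕ → MatPoly N)
    (h : Polynomial ℂ) : ℕ → MatPoly N :=
  fun k => if k = 0 then 0 else assocG U (G k) h

/-!
Difference quotients turn the recurrences for `V_k` and `G_k` into the same
recurrences for the associated polynomials `B⁽¹⁾_{k-1}` and `G⁽¹⁾_{k-1}`: the
term `U(V_k(h(x)) P₀(x))` that appears on the way vanishes by orthogonality for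
`k ≥ 1`, and similarly for `G_k`. For a left solution `v` and a right solution
`g`, the Casoratian `g_{k+1} C_{k+1} v_k - g_k A_k v_{k+1}` does not depend on
`k`. From the initial values (with `G₀ U(P₀) = I` by bi-orthogonality) the four
Casoratians of `(G, V)`, `(G, B⁽¹⁾)`, `(G⁽¹⁾, V)`, `(G⁽¹⁾, B⁽¹⁾)` are
`0, -1, 1, 0`, i.e. a `2 × 2` block matrix built from the four sequences has a
left inverse. A left inverse of a square matrix is also a right inverse, and the
top-left block of the reversed product is the formula.
-/

section Casoratian

variable {R S : Type*} [CommRing R] [Ring S] [Algebra R S] (A B C : ℕ → S) (z : R)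

def IsLeftSolution (v : ℕ → S) : Prop :=
  ∀ k, z • v (k + 1) = A (k + 1) * v (k + 2) + B (k + 1) * v (k + 1) + C (k + 1) * v k

def IsRightSolution (g : ℕ → S) : Prop :=
  ∀ k, z • g (k + 1) = g k * A k + g (k + 1) * B (k + 1) + g (k + 2) * C (k + 2)

def casoratian (g v : ℕ → S) (k : ℕ) : S :=
  g (k + 1) * C (k + 1) * v k - g k * A k * v (k + 1)

variable {A B C z} {g v : ℕ → S}

theorem casoratian_succ (hg : IsRightSolution A B C z g) (hv : IsLeftSolution A B C z v)
    (k : ℕ) : casoratian A C g v (k + 1) = casoratian A C g v k := by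
  have hg' : g (k + 2) * C (k + 2) = z • g (k + 1) - g k * A k - g (k + 1) * B (k + 1) := by
    rw [hg k]; abel
  have hv' :
      A (k + 1) * v (k + 2) = z • v (k + 1) - B (k + 1) * v (k + 1) - C (k + 1) * v k := by
    rw [hv k]; abel
  simp only [casoratian, mul_assoc (g (k + 1)), hv', hg', sub_mul, mul_sub, smul_mul_assoc,
    mul_smul_comm, mul_assoc]
  abel

theorem casoratian_eq_casoratian_zero (hg : IsRightSolution A B C z g)
    (hv : IsLeftSolution A B C z v) (k : ℕ) : casoratian A C g v k = casoratian A C g v 0 := by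
  induction k with
  | zero => rfl
  | succ k ih => rw [casoratian_succ hg hv, ih]

end Casoratian

theorem Matrix.mul_add_mul_eq_one_of_fromBlocks_mul_eq_one {R n : Type*} [CommRing R]
    [Fintype n] [DecidableEq n] {P Q P' Q' X Y X' Y' : Matrix n n R}
    (h : fromBlocks P Q P' Q' * fromBlocks X Y X' Y' = 1) : X * P + Y * P' = 1 := by
  rw [mul_eq_one_comm, fromBlocks_multiply, ← fromBlocks_one] at h
  exact (Matrix.fromBlocks_inj.1 h).1

section Liouville

variable {R n : Type*} [CommRing R] [Fintype n] [DecidableEq n]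
  {A B C : ℕ → Matrix n n R} {z : R} {v q g s : ℕ → Matrix n n R}

theorem liouville_ostrogradski_of_casoratian (m : ℕ)
    (hgv : casoratian A C g v m = 0) (hgq : casoratian A C g q m = -1)
    (hsv : casoratian A C s v m = 1) (hsq : casoratian A C s q m = 0) :
    (q (m + 1) * g m - v (m + 1) * s m) * A m = 1 := by
  have hblock : fromBlocks (-(s m * A m)) (s (m + 1) * C (m + 1)) (g m * A m)
      (-(g (m + 1) * C (m + 1))) * fromBlocks (v (m + 1)) (q (m + 1)) (v m) (q m) =
      fromBlocks (casoratian A C s v m) (casoratian A C s q m)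
        (-casoratian A C g v m) (-casoratian A C g q m) := by
    rw [fromBlocks_multiply]
    congr 1 <;> simp only [casoratian] <;> noncomm_ring
  rw [hgv, hgq, hsv, hsq, neg_zero, neg_neg, fromBlocks_one] at hblock
  rw [← mul_add_mul_eq_one_of_fromBlocks_mul_eq_one hblock]
  noncomm_ring

theorem liouville_ostrogradski_of_solutions
    (hv : IsLeftSolution A B C z v) (hq : IsLeftSolution A B C z q)
    (hg : IsRightSolution A B C z g) (hs : IsRightSolution A B C z s)
    (hv0 : v 0 = 1) (hq0 : q 0 = 0) (hs0 : s 0 = 0)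
    (hv1 : z • v 0 = A 0 * v 1 + B 0 * v 0) (hg1 : z • g 0 = g 0 * B 0 + g 1 * C 1)
    (hq1 : g 0 * (A 0 * q 1) = 1) (hs1 : s 1 * C 1 = 1) (m : ℕ) :
    (q (m + 1) * g m - v (m + 1) * s m) * A m = 1 := by
  have hAv : A 0 * v 1 = z • 1 - B 0 := by
    rw [hv0, mul_one] at hv1
    rw [hv1, add_sub_cancel_right]
  have hgC : g 1 * C 1 = z • g 0 - g 0 * B 0 := by rw [hg1, add_sub_cancel_left]
  apply liouville_ostrogradski_of_casoratian m
  · rw [casoratian_eq_casoratian_zero hg hv, casoratian, zero_add, hgC, hv0, mul_assoc, hAv]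
    simp only [mul_sub, mul_smul_comm, mul_one, sub_self]
  · rw [casoratian_eq_casoratian_zero hg hq, casoratian, zero_add, hq0, mul_assoc (g 0), hq1]
    simp
  · rw [casoratian_eq_casoratian_zero hs hv, casoratian, zero_add, hs1, hs0, hv0]
    simp
  · rw [casoratian_eq_casoratian_zero hs hq, casoratian, hq0, hs0]
    simp

end Liouville

section DiffQuot

variable (h : ℂ[X])

theorem X_sub_C_mul_diffQuot (p : ℂ[X]) :
    (X - C h) * diffQuot p h = p.map C - C (p.comp h) :=
  mul_divByMonic_eq_iff_isRoot.2 <| by simp [eval_map, Polynomial.comp]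

theorem diffQuot_eq_of_X_sub_C_mul {p : ℂ[X]} {w : ℂ[X][X]}
    (hw : (X - C h) * w = p.map C - C (p.comp h)) : diffQuot p h = w := by
  rw [diffQuot, ← hw, mul_divByMonic_cancel_left _ (monic_X_sub_C h)]

theorem diffQuot_add (p q : ℂ[X]) : diffQuot (p + q) h = diffQuot p h + diffQuot q h :=
  diffQuot_eq_of_X_sub_C_mul h <| by
    rw [mul_add, X_sub_C_mul_diffQuot, X_sub_C_mul_diffQuot, Polynomial.map_add, add_comp, C_add]
    ring

theorem diffQuot_smul (a : ℂ) (p : ℂ[X]) : diffQuot (a • p) h = a • diffQuot p h :=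
  diffQuot_eq_of_X_sub_C_mul h <| by
    rw [mul_smul_comm, X_sub_C_mul_diffQuot, smul_sub, smul_comp, Polynomial.map_smul,
      ← algebraMap_eq, algebraMap_smul, smul_C]

theorem diffQuot_C (a : ℂ) : diffQuot (C a) h = 0 :=
  diffQuot_eq_of_X_sub_C_mul h <| by simp

theorem diffQuot_X_mul (p : ℂ[X]) : diffQuot (X * p) h = X * diffQuot p h + C (p.comp h) :=
  diffQuot_eq_of_X_sub_C_mul h <| by
    rw [mul_add, mul_left_comm, X_sub_C_mul_diffQuot, Polynomial.map_mul, map_X, mul_comp, X_comp,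
      C_mul]
    ring

def diffQuotAt (z : ℂ) : ℂ[X] →ₗ[ℂ] ℂ[X] where
  toFun p := (diffQuot p h).eval (C z)
  map_add' p q := by rw [diffQuot_add, eval_add]
  map_smul' a p := by rw [diffQuot_smul, eval_smul, RingHom.id_apply]

end DiffQuot

section Evaluation

variable {N : ℕ}

theorem evalM_zero (z : ℂ) : evalM (0 : MatPoly N) z = 0 :=
  map_zero (evalRingHom z).mapMatrix

theorem evalM_add (P Q : MatPoly N) (z : ℂ) : evalM (P + Q) z = evalM P z + evalM Q z :=
  map_add (evalRingHom z).mapMatrix P Q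

theorem evalM_mul (P Q : MatPoly N) (z : ℂ) : evalM (P * Q) z = evalM P z * evalM Q z :=
  map_mul (evalRingHom z).mapMatrix P Q

theorem evalM_X_smul (W : MatPoly N) (z : ℂ) : evalM ((X : ℂ[X]) • W) z = z • evalM W z := by
  ext i j
  simp [evalM]

theorem evalM_mapC (M : Matrix (Fin N) (Fin N) ℂ) (z : ℂ) : evalM (M.map C) z = M := by
  ext i j
  simp [evalM]

theorem compH_mapC (M : Matrix (Fin N) (Fin N) ℂ) (h : ℂ[X]) : compH (M.map C) h = M.map C := by
  ext i j
  simp [compH]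

theorem MatPoly.ext_evalM {P Q : MatPoly N} (H : ∀ z, evalM P z = evalM Q z) : P = Q := by
  refine Matrix.ext fun i j => ?_
  exact Polynomial.funext fun z => congrFun₂ (H z) i j

end Evaluation

section Functionals

variable {N : ℕ} (U : Fin N → (ℂ[X] →ₗ[ℂ] ℂ))

theorem applyU_add (P Q : Fin N → ℂ[X]) : applyU U (P + Q) = applyU U P + applyU U Q := by
  ext i j
  simp [applyU]

theorem applyU_smul (a : ℂ) (P : Fin N → ℂ[X]) : applyU U (a • P) = a • applyU U P := by
  ext i j
  simp [applyU]

theorem applyU_mapC_mulVec (M : Matrix (Fin N) (Fin N) ℂ) (P : Fin N → ℂ[X]) :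
    applyU U (M.map C *ᵥ P) = M * applyU U P := by
  ext i j
  simp [applyU, mulVec, dotProduct, mul_apply, ← smul_eq_C_mul]

theorem transApply_add (K L : MatPoly N) (P : Fin N → ℂ[X]) :
    transApply U (K + L) P = transApply U K P + transApply U L P := by
  ext i j
  simp [transApply, add_mul, sum_add_distrib]

theorem transApply_smul (a : ℂ) (K : MatPoly N) (P : Fin N → ℂ[X]) :
    transApply U (a • K) P = a • transApply U K P := by
  ext i j
  simp [transApply, mul_sum]

theorem transApply_mul_mapC (K : MatPoly N) (M : Matrix (Fin N) (Fin N) ℂ) (P : Fin N → ℂ[X]) :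
    transApply U (K * M.map C) P = transApply U K P * M := by
  ext i j
  simp only [transApply, of_apply, mul_apply, map_apply, sum_mul, map_sum]
  rw [sum_comm]
  refine sum_congr rfl fun t _ => sum_congr rfl fun s _ => ?_
  rw [mul_right_comm, mul_comm, ← smul_eq_C_mul, map_smul, smul_eq_mul, mul_comm]

theorem transApply_mapC (M : Matrix (Fin N) (Fin N) ℂ) (P : Fin N → ℂ[X]) :
    transApply U (M.map C) P = applyU U P * M := by
  ext i j
  simp only [transApply, applyU, of_apply, map_apply, mul_apply]
  refine sum_congr rfl fun s _ => ?_
  rw [← smul_eq_C_mul, map_smul, smul_eq_mul, mul_comm]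

end Functionals

section Associated

variable {N : ℕ} (U : Fin N → (ℂ[X] →ₗ[ℂ] ℂ)) (h : ℂ[X]) (z : ℂ)

theorem eval_applyCoeff (u : ℂ[X] →ₗ[ℂ] ℂ) (q : ℂ[X][X]) :
    (applyCoeff u q).eval z = u (q.eval (C z)) := by
  rw [applyCoeff, Polynomial.sum, eval_finsetSum, eval_eq_sum, Polynomial.sum, map_sum]
  refine sum_congr rfl fun n _ => ?_
  rw [eval_monomial, ← C_pow, mul_comm (q.coeff n), ← smul_eq_C_mul, map_smul, smul_eq_mul,
    mul_comm]

theorem evalM_assocB (W : MatPoly N) :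
    evalM (assocB U W h) z = applyU U ((diffQuotAt h z).mapMatrix W *ᵥ P0 N) := by
  ext i j
  simp [evalM, assocB, applyU, eval_applyCoeff, mulVec, dotProduct, P0, diffQuotAt,
    eval_finsetSum]

theorem evalM_assocG (W : MatPoly N) :
    evalM (assocG U W h) z = transApply U ((diffQuotAt h z).mapMatrix W) (P0 N) := by
  ext i j
  simp [evalM, assocG, transApply, eval_applyCoeff, P0, diffQuotAt, eval_finsetSum]

theorem assocB_mapC (M : Matrix (Fin N) (Fin N) ℂ) : assocB U (M.map C) h = 0 := by
  ext i j : 2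
  simp [assocB, diffQuot_C, applyCoeff]

theorem assocG_mapC (M : Matrix (Fin N) (Fin N) ℂ) : assocG U (M.map C) h = 0 := by
  ext i j : 2
  simp [assocG, diffQuot_C, applyCoeff]

theorem LinearMap.mapMatrix_mapC_mul (f : ℂ[X] →ₗ[ℂ] ℂ[X]) (M : Matrix (Fin N) (Fin N) ℂ)
    (W : MatPoly N) : f.mapMatrix (M.map C * W) = M.map C * f.mapMatrix W := by
  ext i j : 2
  simp [mul_apply, ← smul_eq_C_mul]

theorem LinearMap.mapMatrix_mul_mapC (f : ℂ[X] →ₗ[ℂ] ℂ[X]) (M : Matrix (Fin N) (Fin N) ℂ)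
    (W : MatPoly N) : f.mapMatrix (W * M.map C) = f.mapMatrix W * M.map C := by
  ext i j : 2
  simp [mul_apply, mul_comm _ (C _), ← smul_eq_C_mul]

theorem diffQuotAt_mapMatrix_X_smul (W : MatPoly N) :
    (diffQuotAt h z).mapMatrix ((X : ℂ[X]) • W) =
      z • (diffQuotAt h z).mapMatrix W + compH W h := by
  ext i j : 2
  simp [diffQuotAt, compH, diffQuot_X_mul, smul_eq_C_mul]

theorem evalM_assocB_add (W W' : MatPoly N) :
    evalM (assocB U (W + W') h) z = evalM (assocB U W h) z + evalM (assocB U W' h) z := by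
  simp only [evalM_assocB, map_add, add_mulVec, applyU_add]

theorem evalM_assocB_mapC_mul (M : Matrix (Fin N) (Fin N) ℂ) (W : MatPoly N) :
    evalM (assocB U (M.map C * W) h) z = M * evalM (assocB U W h) z := by
  rw [evalM_assocB, evalM_assocB, LinearMap.mapMatrix_mapC_mul, ← mulVec_mulVec,
    applyU_mapC_mulVec]

theorem evalM_assocB_X_smul (W : MatPoly N) :
    evalM (assocB U ((X : ℂ[X]) • W) h) z =
      z • evalM (assocB U W h) z + applyU U (Bvec W h) := by
  rw [evalM_assocB, evalM_assocB, diffQuotAt_mapMatrix_X_smul, add_mulVec, smul_mulVec,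
    applyU_add, applyU_smul, Bvec]

theorem evalM_assocG_add (W W' : MatPoly N) :
    evalM (assocG U (W + W') h) z = evalM (assocG U W h) z + evalM (assocG U W' h) z := by
  simp only [evalM_assocG, map_add, transApply_add]

theorem evalM_assocG_mul_mapC (W : MatPoly N) (M : Matrix (Fin N) (Fin N) ℂ) :
    evalM (assocG U (W * M.map C) h) z = evalM (assocG U W h) z * M := by
  rw [evalM_assocG, evalM_assocG, LinearMap.mapMatrix_mul_mapC, transApply_mul_mapC]

theorem evalM_assocG_X_smul (W : MatPoly N) :
    evalM (assocG U ((X : ℂ[X]) • W) h) z =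
      z • evalM (assocG U W h) z + transApply U (compH W h) (P0 N) := by
  rw [evalM_assocG, evalM_assocG, diffQuotAt_mapMatrix_X_smul, transApply_add, transApply_smul]

end Associated

section Recurrence

variable {N : ℕ} {U : Fin N → (ℂ[X] →ₗ[ℂ] ℂ)} {h : ℂ[X]}
  {A B C : ℕ → Matrix (Fin N) (Fin N) ℂ} {V G : ℕ → MatPoly N} {M : Matrix (Fin N) (Fin N) ℂ}

theorem isLeftSolution_evalM_assocB
    (hV : ∀ z, IsLeftSolution A B C z fun k => evalM (V k) z)
    (horth : ∀ k, applyU U (Bvec (V (k + 1)) h) = 0) (z : ℂ) :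
    IsLeftSolution A B C z fun k => evalM (assocB U (V k) h) z := by
  intro k
  have hpoly : (X : ℂ[X]) • V (k + 1) = (A (k + 1)).map Polynomial.C * V (k + 2) +
      (B (k + 1)).map Polynomial.C * V (k + 1) + (C (k + 1)).map Polynomial.C * V k :=
    MatPoly.ext_evalM fun w => by
      simpa only [evalM_X_smul, evalM_add, evalM_mul, evalM_mapC] using hV w k
  simpa only [evalM_assocB_X_smul, evalM_assocB_add, evalM_assocB_mapC_mul, horth, add_zero]
    using congrArg (fun W => evalM (assocB U W h) z) hpoly

theorem isRightSolution_evalM_assocG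
    (hG : ∀ z, IsRightSolution A B C z fun k => evalM (G k) z)
    (horth : ∀ k, transApply U (compH (G (k + 1)) h) (P0 N) = 0) (z : ℂ) :
    IsRightSolution A B C z fun k => evalM (assocG U (G k) h) z := by
  intro k
  have hpoly : (X : ℂ[X]) • G (k + 1) = G k * (A k).map Polynomial.C +
      G (k + 1) * (B (k + 1)).map Polynomial.C + G (k + 2) * (C (k + 2)).map Polynomial.C :=
    MatPoly.ext_evalM fun w => by
      simpa only [evalM_X_smul, evalM_add, evalM_mul, evalM_mapC] using hG w k
  simpa only [evalM_assocG_X_smul, evalM_assocG_add, evalM_assocG_mul_mapC, horth, add_zero]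
    using congrArg (fun W => evalM (assocG U W h) z) hpoly

theorem mul_evalM_assocB_one (hV0 : V 0 = M.map Polynomial.C)
    (hV : ∀ z, z • evalM (V 0) z = A 0 * evalM (V 1) z + B 0 * evalM (V 0) z) (z : ℂ) :
    A 0 * evalM (assocB U (V 1) h) z = applyU U (Bvec (V 0) h) := by
  have hpoly : (X : ℂ[X]) • V 0 = (A 0).map Polynomial.C * V 1 + (B 0).map Polynomial.C * V 0 :=
    MatPoly.ext_evalM fun w => by
      simpa only [evalM_X_smul, evalM_add, evalM_mul, evalM_mapC] using hV w
  have hzero : evalM (assocB U (V 0) h) z = 0 := by rw [hV0, assocB_mapC, evalM_zero]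
  simpa only [evalM_assocB_X_smul, evalM_assocB_add, evalM_assocB_mapC_mul, hzero, smul_zero,
    zero_add, mul_zero, add_zero, eq_comm]
    using congrArg (fun W => evalM (assocB U W h) z) hpoly

theorem evalM_assocG_one_mul (hG0 : G 0 = M.map Polynomial.C)
    (hG : ∀ z, z • evalM (G 0) z = evalM (G 0) z * B 0 + evalM (G 1) z * C 1) (z : ℂ) :
    evalM (assocG U (G 1) h) z * C 1 = transApply U (compH (G 0) h) (P0 N) := by
  have hpoly : (X : ℂ[X]) • G 0 = G 0 * (B 0).map Polynomial.C + G 1 * (C 1).map Polynomial.C :=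
    MatPoly.ext_evalM fun w => by
      simpa only [evalM_X_smul, evalM_add, evalM_mul, evalM_mapC] using hG w
  have hzero : evalM (assocG U (G 0) h) z = 0 := by rw [hG0, assocG_mapC, evalM_zero]
  simpa only [evalM_assocG_X_smul, evalM_assocG_add, evalM_assocG_mul_mapC, hzero, smul_zero,
    zero_add, zero_mul, eq_comm]
    using congrArg (fun W => evalM (assocG U W h) z) hpoly

theorem G1seq_eq_assocG (hG0 : G 0 = M.map Polynomial.C) (k : ℕ) :
    G1seq U G h k = assocG U (G k) h := by
  cases k with
  | zero => rw [G1seq, if_pos rfl, hG0, assocG_mapC]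
  | succ k => rw [G1seq, if_neg k.succ_ne_zero]

end Recurrence

theorem liouville_ostrogradski_general
    (N : ℕ)
    (U : Fin N → (Polynomial ℂ →ₗ[ℂ] ℂ))
    (h : Polynomial ℂ)
    (A B C : ℕ → Matrix (Fin N) (Fin N) ℂ)
    (V G : ℕ → MatPoly N)
    (hV0I : V 0 = 1)
    (g0 : Matrix (Fin N) (Fin N) ℂ)
    (hG0c : G 0 = g0.map fun a => Polynomial.C a)
    (hVrec0 : ∀ z : ℂ, z • evalM (V 0) z = A 0 * evalM (V 1) z + B 0 * evalM (V 0) z)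
    (hVrec : ∀ (m : ℕ) (z : ℂ), z • evalM (V (m + 1)) z =
      A (m + 1) * evalM (V (m + 2)) z + B (m + 1) * evalM (V (m + 1)) z +
        C (m + 1) * evalM (V m) z)
    (hGrec0 : ∀ z : ℂ, z • evalM (G 0) z = evalM (G 0) z * B 0 + evalM (G 1) z * C 1)
    (hGrec : ∀ (m : ℕ) (z : ℂ), z • evalM (G (m + 1)) z =
      evalM (G m) z * A m + evalM (G (m + 1)) z * B (m + 1) +
        evalM (G (m + 2)) z * C (m + 2))
    (hleft : ∀ m, ∀ k < m, applyU U (fun i => h ^ k * Bvec (V m) h i) = 0)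
    (hright : ∀ m, ∀ j < m,
      transApply U (compH (G m) h) (fun i => h ^ j * P0 N i) = 0)
    (hbi : ∀ n m, transApply U (compH (G n) h) (Bvec (V m) h) =
      if n = m then 1 else 0) :
    ∀ (m : ℕ) (z : ℂ),
      evalM (assocB U (V (m + 1)) h) z * evalM (G m) z
        - evalM (V (m + 1)) z * evalM (G1seq U G h m) z = (A m)⁻¹ := by
  intro m z
  have hV0 : V 0 = (1 : Matrix (Fin N) (Fin N) ℂ).map Polynomial.C := by
    rw [hV0I, Matrix.map_one _ (map_zero _) (map_one _)]
  have hBvec0 : Bvec (V 0) h = P0 N := by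
    rw [Bvec, hV0, compH_mapC, ← hV0, hV0I, one_mulVec]
  have hUP : transApply U (compH (G 0) h) (P0 N) = 1 := by simpa [hBvec0] using hbi 0 0
  have hGU : g0 * applyU U (P0 N) = 1 := by
    rwa [hG0c, compH_mapC, transApply_mapC, mul_eq_one_comm] at hUP
  have hv : IsLeftSolution A B C z fun k => evalM (V k) z := fun k => hVrec k z
  have hq : IsLeftSolution A B C z fun k => evalM (assocB U (V k) h) z :=
    isLeftSolution_evalM_assocB (fun w k => hVrec k w)
      (fun k => by simpa using hleft (k + 1) 0 k.succ_pos) z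
  have hg : IsRightSolution A B C z fun k => evalM (G k) z := fun k => hGrec k z
  have hs : IsRightSolution A B C z fun k => evalM (assocG U (G k) h) z :=
    isRightSolution_evalM_assocG (fun w k => hGrec k w)
      (fun k => by simpa using hright (k + 1) 0 k.succ_pos) z
  rw [G1seq_eq_assocG hG0c]
  refine (inv_eq_left_inv (liouville_ostrogradski_of_solutions hv hq hg hs ?_ ?_ ?_
    (hVrec0 z) (hGrec0 z) ?_ ?_ m)).symm
  · rw [hV0, evalM_mapC]
  · rw [hV0, assocB_mapC, evalM_zero]
  · rw [hG0c, assocG_mapC, evalM_zero]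
  · rw [mul_evalM_assocB_one hV0 hVrec0, hBvec0, hG0c, evalM_mapC, hGU]
  · rw [evalM_assocG_one_mul hG0c hGrec0, hUP]

/-- **Liouville–Ostrogradski type formula.**  Under the bi-orthogonality setup,
for every `m ≥ 0` and all `z ∈ ℂ`:
`B⁽¹⁾_m(z) G_m(z) - V_{m+1}(z) G⁽¹⁾_{m-1}(z) = A_m⁻¹`.
Here `B⁽¹⁾_m = assocB U (V (m+1)) h` and `G⁽¹⁾_{m-1} = G1seq U G h m`
(with `G⁽¹⁾_{-1} = 0`). -/
theorem liouville_ostrogradski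
    (N : ℕ) (hN : 1 ≤ N)
    (U : Fin N → (Polynomial ℂ →ₗ[ℂ] ℂ))
    (h : Polynomial ℂ) (hdeg : h.natDegree = N)
    (A B C : ℕ → Matrix (Fin N) (Fin N) ℂ)
    (hA : ∀ m, IsUnit (A m)) (hC : ∀ m, IsUnit (C m))
    (V G : ℕ → MatPoly N)
    (hV0I : V 0 = 1)
    (g0 : Matrix (Fin N) (Fin N) ℂ) (hg0 : IsUnit g0)
    (hG0c : G 0 = g0.map fun a => Polynomial.C a)
    (hVrec0 : ∀ z : ℂ, z • evalM (V 0) z = A 0 * evalM (V 1) z + B 0 * evalM (V 0) z)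
    (hVrec : ∀ (m : ℕ) (z : ℂ), z • evalM (V (m + 1)) z =
      A (m + 1) * evalM (V (m + 2)) z + B (m + 1) * evalM (V (m + 1)) z +
        C (m + 1) * evalM (V m) z)
    (hGrec0 : ∀ z : ℂ, z • evalM (G 0) z = evalM (G 0) z * B 0 + evalM (G 1) z * C 1)
    (hGrec : ∀ (m : ℕ) (z : ℂ), z • evalM (G (m + 1)) z =
      evalM (G m) z * A m + evalM (G (m + 1)) z * B (m + 1) +
        evalM (G (m + 2)) z * C (m + 2))
    (hleft : ∀ m, ∀ k < m, applyU U (fun i => h ^ k * Bvec (V m) h i) = 0)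
    (hleftn : ∀ m, IsUnit (applyU U fun i => h ^ m * Bvec (V m) h i))
    (hright : ∀ m, ∀ j < m,
      transApply U (compH (G m) h) (fun i => h ^ j * P0 N i) = 0)
    (hrightn : ∀ m, IsUnit (transApply U (compH (G m) h) fun i => h ^ m * P0 N i))
    (hbi : ∀ n m, transApply U (compH (G n) h) (Bvec (V m) h) =
      if n = m then 1 else 0) :
    ∀ (m : ℕ) (z : ℂ),
      evalM (assocB U (V (m + 1)) h) z * evalM (G m) z
        - evalM (V (m + 1)) z * evalM (G1seq U G h m) z = (A m)⁻¹ :=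
  liouville_ostrogradski_general N U h A B C V G hV0I g0 hG0c hVrec0 hVrec hGrec0 hGrec hleft hright
    hbi

end
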